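/- arXiv:1509.00311 — 7 statements merged into one kernel-verified Lean document; each statement's English description precedes it below -/
import Mathlib

section
/- Let G₁ be a matrix block of dimension k₁ × k_m and length n₁ which is left orthogonal (⟨G₁ᵀ, G₁⟩ = I), and let G₂, H₂ be matrix blocks of dimension k_m × k₂ and length n₂. Then ⟨(G₁ ⊗ G₂)ᵀ, G₁ ⊗ H₂⟩ = ⟨G₂ᵀ, H₂⟩. -/
open Matrix

theorem Matrix.sum_transpose_mul_mul_mul_of_common_left {ι m n p q R : Type*} [Fintype m]
    [Fintype n] [CommSemiring R] (s : Finset ι) (A : ι → Matrix m n R) (B : Matrix n p R)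
    (C : Matrix n q R) :
    ∑ i ∈ s, (A i * B)ᵀ * (A i * C) = Bᵀ * (∑ i ∈ s, (A i)ᵀ * A i) * C := by
  simp only [Matrix.mul_sum, Matrix.sum_mul, transpose_mul, Matrix.mul_assoc]

/-- **Orthogonality of Kronecker products (left-orthogonal case).**
If the matrix block `G₁` (dimension `k₁ × km`, length `n₁`) is left orthogonal,
i.e. `⟨G₁ᵀ, G₁⟩ = I`, and `G₂, H₂` are matrix blocks of dimension `km × k₂` and
length `n₂`, then `⟨(G₁ ⊗ G₂)ᵀ, G₁ ⊗ H₂⟩ = ⟨G₂ᵀ, H₂⟩`. -/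
theorem scalarProduct_kroneckerProduct_of_leftOrthogonal
    (k₁ km k₂ n₁ n₂ : ℕ)
    (G₁ : Fin n₁ → Matrix (Fin k₁) (Fin km) ℝ)
    (G₂ H₂ : Fin n₂ → Matrix (Fin km) (Fin k₂) ℝ)
    (hG₁ : ∑ i₁ : Fin n₁, (G₁ i₁)ᵀ * G₁ i₁ = 1) :
    ∑ i : Fin n₁ × Fin n₂, (G₁ i.1 * G₂ i.2)ᵀ * (G₁ i.1 * H₂ i.2)
      = ∑ i₂ : Fin n₂, (G₂ i₂)ᵀ * H₂ i₂ := by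
  rw [Fintype.sum_prod_type_right]
  simp only [sum_transpose_mul_mul_mul_of_common_left, hG₁, Matrix.mul_one]
end

section
/- Let G₂ be a matrix block of dimension k_m × k₂ and length n₂ which is right orthogonal (⟨G₂, G₂ᵀ⟩ = I), and let G₁, H₁ be matrix blocks of dimension k₁ × k_m and length n₁. Then ⟨G₁ ⊗ G₂, (H₁ ⊗ G₂)ᵀ⟩ = ⟨G₁, H₁ᵀ⟩. -/
open Matrix

theorem Matrix.sum_mul_mul_transpose_mul {ι l m n R : Type*} [Fintype ι] [Fintype m] [Fintype n]
    [CommSemiring R] (A B : Matrix l m R) (G : ι → Matrix m n R) :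
    ∑ i, (A * G i) * (B * G i)ᵀ = A * (∑ i, G i * (G i)ᵀ) * Bᵀ := by
  simp only [Matrix.mul_sum, Matrix.sum_mul, transpose_mul, Matrix.mul_assoc]

/-- **Orthogonality of Kronecker products (right-orthogonal case).**
If the matrix block `G₂` (dimension `km × k₂`, length `n₂`) is right orthogonal,
i.e. `⟨G₂, G₂ᵀ⟩ = I`, and `G₁, H₁` are matrix blocks of dimension `k₁ × km` and
length `n₁`, then `⟨G₁ ⊗ G₂, (H₁ ⊗ G₂)ᵀ⟩ = ⟨G₁, H₁ᵀ⟩`. -/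
theorem scalarProduct_kroneckerProduct_of_rightOrthogonal
    (k₁ km k₂ n₁ n₂ : ℕ)
    (G₁ H₁ : Fin n₁ → Matrix (Fin k₁) (Fin km) ℝ)
    (G₂ : Fin n₂ → Matrix (Fin km) (Fin k₂) ℝ)
    (hG₂ : ∑ i₂ : Fin n₂, G₂ i₂ * (G₂ i₂)ᵀ = 1) :
    ∑ i : Fin n₁ × Fin n₂, (G₁ i.1 * G₂ i.2) * (H₁ i.1 * G₂ i.2)ᵀ
      = ∑ i₁ : Fin n₁, G₁ i₁ * (H₁ i₁)ᵀ := by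
  simp only [Fintype.sum_prod_type, Matrix.sum_mul_mul_transpose_mul, hG₂, Matrix.mul_one]
end

section
/- Let G₁, …, G_m be matrix blocks with G_μ of dimension r_{μ-1} × r_μ and length n_μ, and let H₁, …, H_m be matrix blocks with H_μ of dimension r'_{μ-1} × r'_μ and length n_μ, where r₀ = r'₀. Define the matrices L_s := ⟨(G₁ ⊗ … ⊗ G_{s-1})ᵀ, H₁ ⊗ … ⊗ H_{s-1}⟩ ∈ ℝ^{r_{s-1} × r'_{s-1}} for s = 2, …, m+1, and L₁ := I (the r₀ × r₀ identity). Then for every s with 2 ≤ s ≤ m+1, L_s = ⟨G_{s-1}ᵀ, L_{s-1}, H_{s-1}⟩ = ∑_i G_{s-1}(i)ᵀ L_{s-1} H_{s-1}(i), i.e. the Gram-type matrices L_s can be computed by this successive recursion. -/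
/-!
Writing a tuple `(i₁, …, i_{s+1})` as `Fin.snoc (i₁, …, i_s) i_{s+1}` factors the Kronecker
product as `(G₁ ⊗ … ⊗ G_s)(i₁, …, i_s) * G_{s+1}(i_{s+1})` and splits the sum over tuples into a
double sum; transposition reverses the first product, and the inner sum is the previous Gram matrix.
-/

open Matrix

/-- The (ordered) Kronecker product `G₁ ⊗ … ⊗ G_s` of the first `s` matrix blocks of a
family of matrix blocks `G`, where `G μ` has dimension `r μ × r (μ+1)` and length `n μ`.
It is a matrix block of dimension `r 0 × r s`, indexed by tuples `(i₁,…,i_s)`;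
the empty product is the (length-one) identity block. -/
def blockProd {r n : ℕ → ℕ}
    (G : ∀ μ : ℕ, Fin (n μ) → Matrix (Fin (r μ)) (Fin (r (μ + 1))) ℝ) :
    (s : ℕ) → ((μ : Fin s) → Fin (n μ.val)) → Matrix (Fin (r 0)) (Fin (r s)) ℝ
  | 0, _ => 1
  | s + 1, i =>
      blockProd G s (fun μ => i ⟨μ.val, Nat.lt_succ_of_lt μ.isLt⟩) *
        G s (i ⟨s, Nat.lt_succ_self s⟩)

theorem Fin.sum_univ_pi_snoc {M : Type*} [AddCommMonoid M] {s : ℕ} {α : Fin (s + 1) → Type*}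
    [∀ k, Fintype (α k)] (f : (∀ k, α k) → M) :
    ∑ i, f i = ∑ j : α (Fin.last s), ∑ i : (∀ k : Fin s, α k.castSucc), f (Fin.snoc i j) := by
  rw [← (Fin.snocEquiv α).sum_comp, Fintype.sum_prod_type]
  rfl

section BlockProd

variable {r n : ℕ → ℕ} (G : ∀ μ : ℕ, Fin (n μ) → Matrix (Fin (r μ)) (Fin (r (μ + 1))) ℝ)

theorem blockProd_zero (i : (μ : Fin 0) → Fin (n μ.val)) : blockProd G 0 i = 1 := rfl

theorem blockProd_snoc {s : ℕ} (i : (μ : Fin s) → Fin (n μ.val)) (j : Fin (n s)) :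
    blockProd G (s + 1) (Fin.snoc (α := fun μ : Fin (s + 1) => Fin (n μ.val)) i j) =
      blockProd G s i * G s j := by
  rw [blockProd]
  congr
  · funext μ
    exact Fin.snoc_castSucc (α := fun μ : Fin (s + 1) => Fin (n μ.val)) ..
  · exact Fin.snoc_last (α := fun μ : Fin (s + 1) => Fin (n μ.val)) ..

end BlockProd

section BlockGram

variable {rG rH n : ℕ → ℕ}
  (G : ∀ μ : ℕ, Fin (n μ) → Matrix (Fin (rG μ)) (Fin (rG (μ + 1))) ℝ)
  (H : ∀ μ : ℕ, Fin (n μ) → Matrix (Fin (rH μ)) (Fin (rH (μ + 1))) ℝ)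
  (J : Matrix (Fin (rG 0)) (Fin (rH 0)) ℝ)

noncomputable def blockGram (s : ℕ) : Matrix (Fin (rG s)) (Fin (rH s)) ℝ :=
  ∑ i : (μ : Fin s) → Fin (n μ.val), (blockProd G s i)ᵀ * J * blockProd H s i

theorem blockGram_zero : blockGram G H J 0 = J := by
  simp [blockGram, blockProd_zero]

theorem blockGram_succ (s : ℕ) :
    blockGram G H J (s + 1) = ∑ j : Fin (n s), (G s j)ᵀ * blockGram G H J s * H s j := by
  rw [blockGram, Fin.sum_univ_pi_snoc]
  refine Finset.sum_congr rfl fun j _ => ?_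
  rw [blockGram, Matrix.mul_sum, Matrix.sum_mul]
  refine Finset.sum_congr rfl fun i _ => ?_
  simp only [blockProd_snoc, transpose_mul, Matrix.mul_assoc]

end BlockGram

theorem gram_succ_recursion_general
    (m : ℕ) (rG rH n : ℕ → ℕ)
    (G : ∀ μ : ℕ, Fin (n μ) → Matrix (Fin (rG μ)) (Fin (rG (μ + 1))) ℝ)
    (H : ∀ μ : ℕ, Fin (n μ) → Matrix (Fin (rH μ)) (Fin (rH (μ + 1))) ℝ)
    (J : Matrix (Fin (rG 0)) (Fin (rH 0)) ℝ)
    (L : ∀ s : ℕ, Matrix (Fin (rG s)) (Fin (rH s)) ℝ)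
    (hL : ∀ s : ℕ, L s = ∑ i : ((μ : Fin s) → Fin (n μ.val)),
        (blockProd G s i)ᵀ * J * blockProd H s i) :
    L 0 = J ∧
      ∀ s : ℕ, s < m → L (s + 1) = ∑ j : Fin (n s), (G s j)ᵀ * L s * H s j := by
  obtain rfl : L = blockGram G H J := funext hL
  exact ⟨blockGram_zero G H J, fun s _ => blockGram_succ G H J s⟩

/-- **Successive computation of the Gram-type matrices (Lemma "Successive computing").**
Given matrix blocks `G μ` of dimension `rG μ × rG (μ+1)` and `H μ` of dimension
`rH μ × rH (μ+1)`, both of length `n μ`, with `rG 0 = rH 0`, define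
`L s := ⟨(G₁ ⊗ … ⊗ G_s)ᵀ, H₁ ⊗ … ⊗ H_s⟩` (the middle dimensions `rG 0` and `rH 0`
being identified via the rectangular identity matrix `J`).  Then `L 0 = J` and the
matrices `L` satisfy the successive recursion
`L (s+1) = ⟨(G s)ᵀ, L s, H s⟩ = ∑ j, (G s j)ᵀ * L s * H s j` for all `s < m`. -/
theorem gram_succ_recursion
    (m : ℕ) (rG rH n : ℕ → ℕ) (h0 : rG 0 = rH 0)
    (G : ∀ μ : ℕ, Fin (n μ) → Matrix (Fin (rG μ)) (Fin (rG (μ + 1))) ℝ)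
    (H : ∀ μ : ℕ, Fin (n μ) → Matrix (Fin (rH μ)) (Fin (rH (μ + 1))) ℝ)
    (J : Matrix (Fin (rG 0)) (Fin (rH 0)) ℝ)
    (hJ : J = Matrix.of fun (a : Fin (rG 0)) (b : Fin (rH 0)) => if (a : ℕ) = (b : ℕ) then (1 : ℝ) else 0)
    (L : ∀ s : ℕ, Matrix (Fin (rG s)) (Fin (rH s)) ℝ)
    (hL : ∀ s : ℕ, L s = ∑ i : ((μ : Fin s) → Fin (n μ.val)),
        (blockProd G s i)ᵀ * J * blockProd H s i) :
    L 0 = J ∧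
      ∀ s : ℕ, s < m → L (s + 1) = ∑ j : Fin (n s), (G s j)ᵀ * L s * H s j :=
  gram_succ_recursion_general m rG rH n G H J L hL
end

section
/- Let G₁, …, G_m be matrix blocks with G_μ of dimension r_{μ-1} × r_μ and length n_μ, and suppose each G_μ is left orthogonal, i.e. ⟨G_μᵀ, G_μ⟩ = I, and r₀ = 1. Then the Kronecker product G₁ ⊗ … ⊗ G_m is left orthogonal, i.e. ⟨(G₁ ⊗ … ⊗ G_m)ᵀ, G₁ ⊗ … ⊗ G_m⟩ = ∑_{i₁,…,i_m} (G₁(i₁)⋯G_m(i_m))ᵀ (G₁(i₁)⋯G_m(i_m)) = I (the r_m × r_m identity matrix). -/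
/-!
Since `(A * B)ᵀ * (A * B) = Bᵀ * (Aᵀ * A) * B`, summing over the index of the first factor gives
`⟨(H₁ ⊗ H₂)ᵀ, H₁ ⊗ H₂⟩ = ∑ j, H₂(j)ᵀ * ⟨H₁ᵀ, H₁⟩ * H₂(j)`, so the Kronecker product of two left
orthogonal blocks is left orthogonal; induction on `m` finishes the proof.
-/

open Matrix

def Matrix.IsLeftOrthogonal {ι l m R : Type*} [Fintype ι] [Fintype l] [DecidableEq m]
    [CommSemiring R] (H : ι → Matrix l m R) : Prop :=
  ∑ i, (H i)ᵀ * H i = 1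

theorem Matrix.sum_transpose_mul_mul_right {ι l m n R : Type*} [Fintype ι] [Fintype l]
    [Fintype m] [CommSemiring R] (A : ι → Matrix l m R) (B : Matrix m n R) :
    ∑ i, (A i * B)ᵀ * (A i * B) = Bᵀ * (∑ i, (A i)ᵀ * A i) * B := by
  simp only [transpose_mul, Matrix.mul_sum, Matrix.sum_mul, Matrix.mul_assoc]

namespace Matrix.IsLeftOrthogonal

variable {ι κ l m n R : Type*} [Fintype ι] [Fintype κ] [Fintype l]
  [DecidableEq m] [DecidableEq n] [CommSemiring R]

theorem comp_equiv {H : ι → Matrix l m R} (h : IsLeftOrthogonal H) (e : κ ≃ ι) :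
    IsLeftOrthogonal (H ∘ e) :=
  (e.sum_comp fun i => (H i)ᵀ * H i).trans h

theorem kronecker [Fintype m] {H₁ : ι → Matrix l m R} {H₂ : κ → Matrix m n R}
    (h₁ : IsLeftOrthogonal H₁) (h₂ : IsLeftOrthogonal H₂) :
    IsLeftOrthogonal fun p : ι × κ => H₁ p.1 * H₂ p.2 := by
  unfold IsLeftOrthogonal at *
  rw [Fintype.sum_prod_type_right]
  simp only [sum_transpose_mul_mul_right, h₁, Matrix.mul_one, h₂]

end Matrix.IsLeftOrthogonal

theorem kroneckerProd_leftOrthogonal_general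
    (m : ℕ) (r n : ℕ → ℕ)
    (G : ∀ μ : ℕ, Fin (n μ) → Matrix (Fin (r μ)) (Fin (r (μ + 1))) ℝ)
    (horth : ∀ μ : ℕ, μ < m → ∑ j : Fin (n μ), (G μ j)ᵀ * G μ j = 1) :
    ∑ i : ((μ : Fin m) → Fin (n μ.val)),
      (blockProd G m i)ᵀ * blockProd G m i = 1 := by
  show IsLeftOrthogonal (blockProd G m)
  induction m with
  | zero => simp [IsLeftOrthogonal, blockProd]
  | succ s ih =>
    have hs : IsLeftOrthogonal (blockProd G s) := ih fun μ hμ => horth μ (Nat.lt_succ_of_lt hμ)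
    -- `blockProd G (s + 1) i` unfolds to `blockProd G s (Fin.init i) * G s (i (Fin.last s))`.
    exact (hs.kronecker (horth s s.lt_succ_self)).comp_equiv
      ((Fin.snocEquiv fun μ : Fin (s + 1) => Fin (n μ)).symm.trans (Equiv.prodComm _ _))

/-- **Left orthogonality of Kronecker products.**
If each matrix block `G μ` (dimension `r μ × r (μ+1)`, length `n μ`, for `μ < m`) is
left orthogonal, i.e. `⟨(G μ)ᵀ, G μ⟩ = I`, and `r 0 = 1`, then the Kronecker product
`G₁ ⊗ … ⊗ G_m` is left orthogonal:
`∑_{i₁,…,i_m} (G₁(i₁)⋯G_m(i_m))ᵀ (G₁(i₁)⋯G_m(i_m)) = I` (the `r m × r m` identity). -/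
theorem kroneckerProd_leftOrthogonal
    (m : ℕ) (r n : ℕ → ℕ) (hr0 : r 0 = 1)
    (G : ∀ μ : ℕ, Fin (n μ) → Matrix (Fin (r μ)) (Fin (r (μ + 1))) ℝ)
    (horth : ∀ μ : ℕ, μ < m → ∑ j : Fin (n μ), (G μ j)ᵀ * G μ j = 1) :
    ∑ i : ((μ : Fin m) → Fin (n μ.val)),
      (blockProd G m i)ᵀ * blockProd G m i = 1 :=
  kroneckerProd_leftOrthogonal_general m r n G horth
end

section
/- Let U ∈ ℝ^{p × a}, V ∈ ℝ^{b × q}, Z ∈ ℝ^{p × q}, G ∈ ℝ^{a × b} and α ∈ ℝ. Suppose G⁺ ∈ ℝ^{a × b} minimizes X ↦ ‖Z − U X V‖_F over all X ∈ ℝ^{a × b}. Set Z^α := α Z + (1−α) U G V and G^α := α G⁺ + (1−α) G. Then G^α minimizes X ↦ ‖Z^α − U X V‖_F over all X ∈ ℝ^{a × b}, i.e. for every X ∈ ℝ^{a × b}, ‖Z^α − U G^α V‖_F ≤ ‖Z^α − U X V‖_F. -/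
/-! Write `L x := U x V`. Substituting `x = α • y + (1 - α) • g` turns the overrelaxed residual
`α • z + (1 - α) • L g - L x` into `α • (z - L y)`, so for `α ≠ 0` the new objective is the old one
scaled by `|α|` and precomposed with an affine bijection; for `α = 0` the overrelaxed block gives
residual `0`. -/

open Matrix

noncomputable def frob {m n : ℕ} (X : Matrix (Fin m) (Fin n) ℝ) : ℝ :=
  Real.sqrt (∑ i, ∑ j, (X i j) ^ 2)

section Overrelaxation

variable {𝕜 E F : Type*} [NormedField 𝕜] [AddCommGroup E] [Module 𝕜 E]
  [SeminormedAddCommGroup F] [NormedSpace 𝕜 F]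

theorem overrelaxed_residual_eq_smul (L : E →ₗ[𝕜] F) (z : F) (g y : E) (α : 𝕜) :
    α • z + (1 - α) • L g - L (α • y + (1 - α) • g) = α • (z - L y) := by
  simp only [map_add, map_smul, smul_sub]
  abel

theorem IsMinOn.overrelax {L : E →ₗ[𝕜] F} {z : F} {g₀ : E}
    (h : IsMinOn (fun x ↦ ‖z - L x‖) Set.univ g₀) (g : E) (α : 𝕜) :
    IsMinOn (fun x ↦ ‖α • z + (1 - α) • L g - L x‖) Set.univ (α • g₀ + (1 - α) • g) := by
  rw [isMinOn_univ_iff] at h ⊢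
  intro x
  rcases eq_or_ne α 0 with rfl | hα
  · simp
  obtain ⟨y, rfl⟩ : ∃ y, α • y + (1 - α) • g = x :=
    ⟨α⁻¹ • (x - (1 - α) • g), by rw [smul_smul, mul_inv_cancel₀ hα, one_smul, sub_add_cancel]⟩
  simp only [overrelaxed_residual_eq_smul, norm_smul]
  exact mul_le_mul_of_nonneg_left (h y) (norm_nonneg α)

end Overrelaxation

section Frobenius

attribute [local instance] Matrix.frobeniusNormedAddCommGroup Matrix.frobeniusNormedSpace

theorem frob_eq_norm {m n : ℕ} (X : Matrix (Fin m) (Fin n) ℝ) : frob X = ‖X‖ := by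
  simp [frob, frobenius_norm_def, Real.sqrt_eq_rpow]

/-- **Overrelaxation lemma for the ADF algorithm (matrix form).**
If `G⁺` minimizes `X ↦ ‖Z − U X V‖_F`, then for any `α ∈ ℝ` the overrelaxed block
`G^α := α G⁺ + (1−α) G` minimizes `X ↦ ‖Z^α − U X V‖_F`, where
`Z^α := α Z + (1−α) U G V`. -/
theorem overrelaxed_argmin
    (p a b q : ℕ)
    (U : Matrix (Fin p) (Fin a) ℝ) (V : Matrix (Fin b) (Fin q) ℝ)
    (Z : Matrix (Fin p) (Fin q) ℝ)
    (G Gplus : Matrix (Fin a) (Fin b) ℝ) (α : ℝ)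
    (hGplus : ∀ X : Matrix (Fin a) (Fin b) ℝ,
      frob (Z - U * Gplus * V) ≤ frob (Z - U * X * V)) :
    ∀ X : Matrix (Fin a) (Fin b) ℝ,
      frob ((α • Z + (1 - α) • (U * G * V)) - U * (α • Gplus + (1 - α) • G) * V)
        ≤ frob ((α • Z + (1 - α) • (U * G * V)) - U * X * V) := by
  let L := (mulRightLinearMap (Fin p) ℝ V).comp (mulLeftLinearMap (Fin b) ℝ U)
  have hmin : IsMinOn (fun X ↦ ‖Z - L X‖) Set.univ Gplus :=
    isMinOn_univ_iff.mpr fun X ↦ by simpa [L, ← frob_eq_norm] using hGplus X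
  intro X
  simpa [L, ← frob_eq_norm] using isMinOn_univ_iff.mp (hmin.overrelax G α) X

end Frobenius
end

section
/- Let A ∈ ℝ^{p × a} have orthonormal columns (Aᵀ A = I) and B ∈ ℝ^{b × q} have orthonormal rows (B Bᵀ = I). Let P be a set of index pairs in {1,…,p} × {1,…,q}, and let S ∈ ℝ^{p × q} be supported on P, i.e. S|_P = S. Set N := Aᵀ S Bᵀ and Q := (A N B)|_P, and assume Q ≠ 0. Then the overrelaxation parameter α* := ‖N‖_F² / ‖Q‖_F² minimizes α ↦ ‖S − α Q‖_F over α ∈ ℝ, i.e. for every α ∈ ℝ, ‖S − α* Q‖_F ≤ ‖S − α Q‖_F. -/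
open Matrix

/-- The restriction `X|_P` of a matrix to a set `P` of index pairs:
entries outside `P` are set to zero. -/
def restrict {p q : ℕ} (P : Finset (Fin p × Fin q))
    (X : Matrix (Fin p) (Fin q) ℝ) : Matrix (Fin p) (Fin q) ℝ :=
  Matrix.of fun i j => if (i, j) ∈ P then X i j else 0

/-!
Since `S` is supported on `P`, restriction to `P` may be moved from `A N B` onto `S`, and then
`⟪Q, S⟫_F = ⟪A N B, S⟫_F = ⟪N, Aᵀ S Bᵀ⟫_F = ‖N‖_F²`. Hence `α* = ⟪Q, S⟫_F / ‖Q‖_F²` is the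
coefficient of the orthogonal projection of `S` onto the line `ℝ Q`, which is the point of that
line closest to `S`.
-/

open RealInnerProductSpace

theorem norm_sub_inner_div_smul_le {E : Type*} [NormedAddCommGroup E] [InnerProductSpace ℝ E]
    (s q : E) (α : ℝ) : ‖s - (⟪q, s⟫ / ‖q‖ ^ 2) • q‖ ≤ ‖s - α • q‖ := by
  have hproj : (ℝ ∙ q).starProjection s = (⟪q, s⟫ / ‖q‖ ^ 2) • q :=
    Submodule.starProjection_singleton ℝ s
  rw [← hproj, Submodule.starProjection_minimal]
  exact ciInf_le (f := fun x : ℝ ∙ q => ‖s - x‖)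
    ⟨0, Set.forall_mem_range.2 fun _ => norm_nonneg _⟩
    ⟨α • q, Submodule.smul_mem _ _ (Submodule.mem_span_singleton_self q)⟩

namespace Matrix

variable {m n : Type*}

def flatten (X : Matrix m n ℝ) : EuclideanSpace ℝ (m × n) :=
  WithLp.toLp 2 fun ij => X ij.1 ij.2

theorem flatten_sub (X Y : Matrix m n ℝ) : flatten (X - Y) = flatten X - flatten Y := rfl

theorem flatten_smul (c : ℝ) (X : Matrix m n ℝ) : flatten (c • X) = c • flatten X := rfl

variable [Fintype m] [Fintype n]

theorem inner_flatten (X Y : Matrix m n ℝ) :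
    ⟪flatten X, flatten Y⟫ = ∑ i, ∑ j, X i j * Y i j := by
  simp [flatten, PiLp.inner_apply, Fintype.sum_prod_type, mul_comm]

theorem inner_flatten_eq_trace (X Y : Matrix m n ℝ) :
    ⟪flatten X, flatten Y⟫ = trace (Xᵀ * Y) := by
  rw [inner_flatten, Finset.sum_comm]
  simp [trace, mul_apply]

theorem norm_flatten_sq (X : Matrix m n ℝ) : ‖flatten X‖ ^ 2 = ∑ i, ∑ j, X i j ^ 2 := by
  rw [← real_inner_self_eq_norm_sq, inner_flatten]
  simp only [sq]

theorem inner_flatten_mul_mul {k l : Type*} [Fintype k] [Fintype l]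
    (A : Matrix m k ℝ) (N : Matrix k l ℝ) (B : Matrix l n ℝ) (S : Matrix m n ℝ) :
    ⟪flatten (A * N * B), flatten S⟫ = ⟪flatten N, flatten (Aᵀ * S * Bᵀ)⟫ := by
  rw [inner_flatten_eq_trace, inner_flatten_eq_trace, transpose_mul, transpose_mul,
    Matrix.mul_assoc, trace_mul_comm]
  simp only [Matrix.mul_assoc]

end Matrix

theorem frob_eq_norm_flatten {p q : ℕ} (X : Matrix (Fin p) (Fin q) ℝ) :
    frob X = ‖flatten X‖ := by
  rw [frob, ← norm_flatten_sq, Real.sqrt_sq (norm_nonneg _)]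

theorem inner_flatten_restrict {p q : ℕ} (P : Finset (Fin p × Fin q))
    (X Y : Matrix (Fin p) (Fin q) ℝ) :
    ⟪flatten (restrict P X), flatten Y⟫ = ⟪flatten X, flatten (restrict P Y)⟫ := by
  simp only [inner_flatten, restrict, of_apply, ite_mul, mul_ite, zero_mul, mul_zero]

theorem optimal_acceleration_general
    (p a b q : ℕ)
    (A : Matrix (Fin p) (Fin a) ℝ) (B : Matrix (Fin b) (Fin q) ℝ)
    (P : Finset (Fin p × Fin q))
    (S : Matrix (Fin p) (Fin q) ℝ) (hS : restrict P S = S)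
    (N : Matrix (Fin a) (Fin b) ℝ) (hN : N = Aᵀ * S * Bᵀ)
    (Q : Matrix (Fin p) (Fin q) ℝ) (hQdef : Q = restrict P (A * N * B))
    (αstar : ℝ) (hα : αstar = (∑ i, ∑ j, (N i j) ^ 2) / (∑ i, ∑ j, (Q i j) ^ 2)) :
    ∀ α : ℝ, frob (S - αstar • Q) ≤ frob (S - α • Q) := by
  intro α
  have hQS : ⟪flatten Q, flatten S⟫ = ∑ i, ∑ j, N i j ^ 2 := by
    rw [hQdef, inner_flatten_restrict, hS, inner_flatten_mul_mul, ← hN, ← norm_flatten_sq,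
      real_inner_self_eq_norm_sq]
  rw [frob_eq_norm_flatten, frob_eq_norm_flatten, flatten_sub, flatten_sub, flatten_smul,
    flatten_smul, hα, ← hQS, ← norm_flatten_sq]
  exact norm_sub_inner_div_smul_le _ _ α

/-- **Optimal acceleration parameter (Lemma "Optimal acceleration").**
Let `A` have orthonormal columns, `B` orthonormal rows, and let `S` be supported on the
sampling set `P` (`S|_P = S`).  With `N := Aᵀ S Bᵀ` and `Q := (A N B)|_P ≠ 0`, the
overrelaxation parameter `α* := ‖N‖_F² / ‖Q‖_F²` minimizes `α ↦ ‖S − α Q‖_F`. -/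
theorem optimal_acceleration
    (p a b q : ℕ)
    (A : Matrix (Fin p) (Fin a) ℝ) (B : Matrix (Fin b) (Fin q) ℝ)
    (hA : Aᵀ * A = 1) (hB : B * Bᵀ = 1)
    (P : Finset (Fin p × Fin q))
    (S : Matrix (Fin p) (Fin q) ℝ) (hS : restrict P S = S)
    (N : Matrix (Fin a) (Fin b) ℝ) (hN : N = Aᵀ * S * Bᵀ)
    (Q : Matrix (Fin p) (Fin q) ℝ) (hQdef : Q = restrict P (A * N * B))
    (hQ : Q ≠ 0)
    (αstar : ℝ) (hα : αstar = (∑ i, ∑ j, (N i j) ^ 2) / (∑ i, ∑ j, (Q i j) ^ 2)) :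
    ∀ α : ℝ, frob (S - αstar • Q) ≤ frob (S - α • Q) :=
  optimal_acceleration_general p a b q A B P S hS N hN Q hQdef αstar hα
end

section
/- Let A ∈ ℝ^{p × a} have orthonormal columns (Aᵀ A = I) and B ∈ ℝ^{b × q} have orthonormal rows (B Bᵀ = I). Let P be a set of index pairs in {1,…,p} × {1,…,q}, and let S ∈ ℝ^{p × q} be supported on P, i.e. S|_P = S. Set N := Aᵀ S Bᵀ and Q := (A N B)|_P, assume Q ≠ 0, and let α* := ‖N‖_F² / ‖Q‖_F². Then the decrease of the squared residual under the optimally overrelaxed update equals α*‖N‖_F²: ‖S‖_F² − ‖S − α* Q‖_F² = α* · ‖N‖_F². -/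
/-!
Write `⟨X, Y⟩ = ∑ i, ∑ j, X i j * Y i j`. Since `S` is supported on `P`, `⟨S, Q⟩ = ⟨S, A N B⟩`,
and by the adjointness `⟨S, A N B⟩ = ⟨Aᵀ S Bᵀ, N⟩` this is `‖N‖²`. So `α*` is the exact
line-search step `⟨S, Q⟩ / ‖Q‖²` along `Q`, which lowers `‖S‖²` by `⟨S, Q⟩² / ‖Q‖² = α* ‖N‖²`.
-/

open Matrix

section Frobenius

variable {m n k l R : Type*} [Fintype m] [Fintype n] [Fintype k] [Fintype l]

theorem Matrix.sum_sum_mul_eq_trace_mul_transpose [CommSemiring R] (X Y : Matrix m n R) :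
    ∑ i, ∑ j, X i j * Y i j = trace (X * Yᵀ) := by
  simp [trace, mul_apply]

theorem Matrix.sum_sum_mul_mul_mul_eq [CommSemiring R] (S : Matrix m n R) (A : Matrix m k R)
    (N : Matrix k l R) (B : Matrix l n R) :
    ∑ i, ∑ j, S i j * (A * N * B) i j = ∑ i, ∑ j, (Aᵀ * S * Bᵀ) i j * N i j := by
  simp only [sum_sum_mul_eq_trace_mul_transpose, transpose_mul, ← Matrix.mul_assoc]
  rw [trace_mul_cycle]
  simp only [Matrix.mul_assoc]

theorem Matrix.sum_sum_sq_sub_smul [CommRing R] (S Q : Matrix m n R) (α : R) :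
    ∑ i, ∑ j, ((S - α • Q) i j) ^ 2
      = ∑ i, ∑ j, S i j ^ 2 - 2 * α * ∑ i, ∑ j, S i j * Q i j + α ^ 2 * ∑ i, ∑ j, Q i j ^ 2 := by
  have hpt : ∀ i j, ((S - α • Q) i j) ^ 2
      = S i j ^ 2 - 2 * α * (S i j * Q i j) + α ^ 2 * Q i j ^ 2 := fun i j => by
    simp only [sub_apply, smul_apply, smul_eq_mul]
    ring
  simp only [hpt, Finset.sum_add_distrib, Finset.sum_sub_distrib, ← Finset.mul_sum]

theorem Matrix.sum_sum_sq_sub_sum_sum_sq_sub_optimal_smul (S Q : Matrix m n ℝ) :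
    ∑ i, ∑ j, S i j ^ 2 - ∑ i, ∑ j,
        ((S - ((∑ i, ∑ j, S i j * Q i j) / ∑ i, ∑ j, Q i j ^ 2) • Q) i j) ^ 2
      = (∑ i, ∑ j, S i j * Q i j) ^ 2 / ∑ i, ∑ j, Q i j ^ 2 := by
  rw [sum_sum_sq_sub_smul]
  rcases eq_or_ne (∑ i, ∑ j, Q i j ^ 2) 0 with hQ | hQ
  · simp [hQ]
  · field_simp
    ring

end Frobenius

theorem sum_sum_mul_restrict {p q : ℕ} (P : Finset (Fin p × Fin q))
    (S X : Matrix (Fin p) (Fin q) ℝ) (hS : restrict P S = S) :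
    ∑ i, ∑ j, S i j * restrict P X i j = ∑ i, ∑ j, S i j * X i j := by
  rw [← hS]
  simp only [restrict, of_apply]
  refine Finset.sum_congr rfl fun i _ => Finset.sum_congr rfl fun j _ => ?_
  split_ifs <;> simp

theorem residual_decrease_optimal_acceleration_general
    (p a b q : ℕ)
    (A : Matrix (Fin p) (Fin a) ℝ) (B : Matrix (Fin b) (Fin q) ℝ)
    (P : Finset (Fin p × Fin q))
    (S : Matrix (Fin p) (Fin q) ℝ) (hS : restrict P S = S)
    (N : Matrix (Fin a) (Fin b) ℝ) (hN : N = Aᵀ * S * Bᵀ)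
    (Q : Matrix (Fin p) (Fin q) ℝ) (hQdef : Q = restrict P (A * N * B))
    (αstar : ℝ) (hα : αstar = (∑ i, ∑ j, (N i j) ^ 2) / (∑ i, ∑ j, (Q i j) ^ 2)) :
    (∑ i, ∑ j, (S i j) ^ 2) - (∑ i, ∑ j, ((S - αstar • Q) i j) ^ 2)
      = αstar * (∑ i, ∑ j, (N i j) ^ 2) := by
  have hSQ : ∑ i, ∑ j, S i j * Q i j = ∑ i, ∑ j, N i j ^ 2 := by
    simp only [hQdef, sum_sum_mul_restrict P S _ hS, sum_sum_mul_mul_mul_eq, ← hN, sq]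
  rw [hα, ← hSQ, sum_sum_sq_sub_sum_sum_sq_sub_optimal_smul]
  ring

/-- **Residual decrease under the optimally overrelaxed update.**
Let `A` have orthonormal columns, `B` orthonormal rows, and let `S` be supported on the
sampling set `P` (`S|_P = S`).  With `N := Aᵀ S Bᵀ`, `Q := (A N B)|_P ≠ 0` and
`α* := ‖N‖_F² / ‖Q‖_F²`, the decrease of the squared residual is
`‖S‖_F² − ‖S − α* Q‖_F² = α* ‖N‖_F²`. -/
theorem residual_decrease_optimal_acceleration
    (p a b q : ℕ)
    (A : Matrix (Fin p) (Fin a) ℝ) (B : Matrix (Fin b) (Fin q) ℝ)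
    (hA : Aᵀ * A = 1) (hB : B * Bᵀ = 1)
    (P : Finset (Fin p × Fin q))
    (S : Matrix (Fin p) (Fin q) ℝ) (hS : restrict P S = S)
    (N : Matrix (Fin a) (Fin b) ℝ) (hN : N = Aᵀ * S * Bᵀ)
    (Q : Matrix (Fin p) (Fin q) ℝ) (hQdef : Q = restrict P (A * N * B))
    (hQ : Q ≠ 0)
    (αstar : ℝ) (hα : αstar = (∑ i, ∑ j, (N i j) ^ 2) / (∑ i, ∑ j, (Q i j) ^ 2)) :
    (∑ i, ∑ j, (S i j) ^ 2) - (∑ i, ∑ j, ((S - αstar • Q) i j) ^ 2)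
      = αstar * (∑ i, ∑ j, (N i j) ^ 2) :=
  residual_decrease_optimal_acceleration_general p a b q A B P S hS N hN Q hQdef αstar hα
end
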